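/- Suppose Σ_k θ_k² < ∞, sup_{k,n}|b_k(ψ_n)| ≤ B < ∞, |W_n|^{-1} Σ_k |b_k(ψ_n)| → 0 as n → ∞, and for every fixed m, max_{1≤k≤m} |b_k(ψ_n) − 1| → 0 as n → ∞. Then Σ_{k=1}^∞ [b_k(ψ_n)² var(θ̂_{k,n}) + θ_k²(b_k(ψ_n) − 1)²] → 0 as n → ∞, i.e., the mean integrated squared error of the orthogonal series estimator tends to zero. -/
import Mathlib


open Filter

/-- Consistency: under square-summability of θ, uniformly bounded coefficients,
variance bound C₁/|W_n|, |W_n|⁻¹ Σ_k |b_k(ψ_n)| → 0 and b_k(ψ_n) → 1 for each fixed k,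
the mean integrated squared error tends to zero. -/
theorem mise_tendsto_zero (θ : ℕ → ℝ) (b : ℕ → ℕ → ℝ) (var : ℕ → ℕ → ℝ)
    (B C₁ : ℝ) (Wn : ℕ → ℝ)
    (hθsum : Summable fun k => θ k ^ 2)
    (hWpos : ∀ n, 0 < Wn n)
    (hWtop : Tendsto Wn atTop atTop)
    (hvar : ∀ k n, 0 ≤ var k n ∧ var k n ≤ C₁ / Wn n)
    (hB : ∀ k n, |b k n| ≤ B)
    (hbsum : ∀ n, Summable fun k => |b k n|)
    (hS3 : Tendsto (fun n => (Wn n)⁻¹ * ∑' k, |b k n|) atTop (nhds 0))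
    (hS2 : ∀ k, Tendsto (fun n => b k n) atTop (nhds 1)) :
    Tendsto (fun n => ∑' k, (b k n ^ 2 * var k n + θ k ^ 2 * (b k n - 1) ^ 2))
      atTop (nhds 0) := by
  have hB0 : 0 ≤ B := (abs_nonneg _).trans (hB 0 0)
  have hC0 : 0 ≤ C₁ := by
    have h := (hvar 0 0).1.trans (hvar 0 0).2
    rcases div_nonneg_iff.mp h with ⟨h1, _⟩ | ⟨_, h2⟩
    · exact h1
    · linarith [hWpos 0]
  -- variance term bounds
  have hvb : ∀ k n, b k n ^ 2 * var k n ≤ |b k n| * (B * (C₁ / Wn n)) := by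
    intro k n
    have h1 : b k n ^ 2 ≤ |b k n| * B := by
      rw [← sq_abs, sq]
      exact mul_le_mul_of_nonneg_left (hB k n) (abs_nonneg _)
    calc b k n ^ 2 * var k n ≤ (|b k n| * B) * (C₁ / Wn n) :=
          mul_le_mul h1 (hvar k n).2 (hvar k n).1 (by positivity)
      _ = |b k n| * (B * (C₁ / Wn n)) := by ring
  have hvnn : ∀ k n, 0 ≤ b k n ^ 2 * var k n := fun k n =>
    mul_nonneg (sq_nonneg _) (hvar k n).1
  have hvsum : ∀ n, Summable fun k => b k n ^ 2 * var k n := fun n =>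
    Summable.of_nonneg_of_le (fun k => hvnn k n) (fun k => hvb k n)
      ((hbsum n).mul_right _)
  -- bias term bounds
  have hbias_le : ∀ k n, θ k ^ 2 * (b k n - 1) ^ 2 ≤ θ k ^ 2 * (B + 1) ^ 2 := by
    intro k n
    have hb' := abs_le.1 (hB k n)
    have h1 : |b k n - 1| ≤ B + 1 := abs_le.2 ⟨by linarith [hb'.1], by linarith [hb'.2]⟩
    have h2 : (b k n - 1) ^ 2 ≤ (B + 1) ^ 2 := by
      rw [← sq_abs (b k n - 1)]
      exact pow_le_pow_left₀ (abs_nonneg _) h1 2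
    exact mul_le_mul_of_nonneg_left h2 (sq_nonneg _)
  have hbias_sum : ∀ n, Summable fun k => θ k ^ 2 * (b k n - 1) ^ 2 := fun n =>
    Summable.of_nonneg_of_le (fun k => by positivity) (fun k => hbias_le k n)
      (hθsum.mul_right _)
  -- split the tsum
  have hsplit : ∀ n, (∑' k, (b k n ^ 2 * var k n + θ k ^ 2 * (b k n - 1) ^ 2))
      = (∑' k, b k n ^ 2 * var k n) + ∑' k, θ k ^ 2 * (b k n - 1) ^ 2 := fun n =>
    Summable.tsum_add (hvsum n) (hbias_sum n)
  -- variance tsum tends to 0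
  have hv0 : Tendsto (fun n => ∑' k, b k n ^ 2 * var k n) atTop (nhds 0) := by
    have hub : ∀ n, (∑' k, b k n ^ 2 * var k n) ≤ B * C₁ * ((Wn n)⁻¹ * ∑' k, |b k n|) := by
      intro n
      calc (∑' k, b k n ^ 2 * var k n) ≤ ∑' k, |b k n| * (B * (C₁ / Wn n)) :=
            Summable.tsum_le_tsum (fun k => hvb k n) (hvsum n) ((hbsum n).mul_right _)
        _ = (∑' k, |b k n|) * (B * (C₁ / Wn n)) := tsum_mul_right
        _ = B * C₁ * ((Wn n)⁻¹ * ∑' k, |b k n|) := by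
            field_simp
    have hlim : Tendsto (fun n => B * C₁ * ((Wn n)⁻¹ * ∑' k, |b k n|)) atTop (nhds 0) := by
      simpa using hS3.const_mul (B * C₁)
    exact squeeze_zero (fun n => tsum_nonneg (fun k => hvnn k n)) hub hlim
  -- bias tsum tends to 0 by dominated convergence
  have hb0 : Tendsto (fun n => ∑' k, θ k ^ 2 * (b k n - 1) ^ 2) atTop (nhds 0) := by
    have : Tendsto (fun n => ∑' k, θ k ^ 2 * (b k n - 1) ^ 2) atTop
        (nhds (∑' _ : ℕ, (0 : ℝ))) := by
      apply tendsto_tsum_of_dominated_convergence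
        (bound := fun k => θ k ^ 2 * (B + 1) ^ 2) (hθsum.mul_right _)
      · intro k
        have : Tendsto (fun n => θ k ^ 2 * (b k n - 1) ^ 2) atTop
            (nhds (θ k ^ 2 * (1 - 1) ^ 2)) :=
          (((hS2 k).sub_const 1).pow 2).const_mul _
        simpa using this
      · filter_upwards with n k
        rw [Real.norm_eq_abs, abs_of_nonneg (by positivity)]
        exact hbias_le k n
    simpa using this
  have := hv0.add hb0
  simp only [add_zero] at this
  exact Tendsto.congr (fun n => (hsplit n).symm) this
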